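/- arXiv:2401.13394 — 5 statements merged into one kernel-verified Lean document; each statement's English description precedes it below -/
import Mathlib

section
/- Let α_1,…,α_n ∈ F_q be distinct, h(z) = Π(z-α_i), and s(z), t(z) ∈ F_q[z] with s(α_i), t(α_i) ≠ 0 for all i and s(α_i)t(α_i) = h'(α_i) for all i. Let v_i = s(α_i)^{-1}. Then a vector (v_1 f(α_1),…,v_n f(α_n)) with deg f ≤ k-1 lies in Hull(GRS_k(α, v)) if and only if there exists g(z) ∈ F_q[z] with deg g ≤ n-k-1 such that h(z) divides f(z)t(z) - g(z)s(z). -/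
/-! For `deg P < n` Lagrange interpolation gives `coeff_{n-1} P = ∑ P(α_i) / h'(α_i)`. Hence
`⟨(w_i g(α_i)), (v_i p(α_i))⟩ = coeff_{n-1} (g p)` for `w_i = (v_i h'(α_i))⁻¹`, which vanishes when
`deg g < n - k` and `deg p < k`, and testing against `p = X^e` shows that nothing else is orthogonal:
the dual of `GRS_k(α, v)` is `GRS_{n-k}(α, w)`. Under `v_i = s(α_i)⁻¹` and `h'(α_i) = s(α_i) t(α_i)`
the multipliers are `w_i = t(α_i)⁻¹`, so the codeword of `f` is in the hull iff
`f(α_i) / s(α_i) = g(α_i) / t(α_i)` at every node for some `deg g < n - k`, i.e. iff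
`h ∣ f t - g s`. -/

open Polynomial Finset

/-- The Euclidean dual code of a linear code `C ⊆ F^n`. -/
def dualCode {F : Type*} [Field F] {n : ℕ} (C : Submodule F (Fin n → F)) :
    Submodule F (Fin n → F) where
  carrier := {x | ∀ y ∈ C, ∑ i, x i * y i = 0}
  add_mem' := by
    intro a b ha hb y hy
    simp only [Set.mem_setOf_eq, Pi.add_apply, add_mul] at *
    rw [Finset.sum_add_distrib, ha y hy, hb y hy, add_zero]
  zero_mem' := by intro y hy; simp
  smul_mem' := by
    intro c a ha y hy
    simp only [Set.mem_setOf_eq, Pi.smul_apply, smul_eq_mul, mul_assoc] at *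
    rw [← Finset.mul_sum, ha y hy, mul_zero]

/-- The generalized Reed–Solomon code `GRS_k(α, v)`. -/
def GRSCode {F : Type*} [Field F] {n : ℕ} (k : ℕ) (α v : Fin n → F) :
    Submodule F (Fin n → F) where
  carrier := {c | ∃ f : Polynomial F, f.degree < k ∧ c = fun i => v i * f.eval (α i)}
  add_mem' := by
    rintro a b ⟨f, hf, rfl⟩ ⟨g, hg, rfl⟩
    exact ⟨f + g, lt_of_le_of_lt (Polynomial.degree_add_le f g) (max_lt hf hg),
      by funext i; simp [mul_add]⟩
  zero_mem' := ⟨0, by rw [Polynomial.degree_zero]; exact bot_lt_iff_ne_bot.mpr (by simp), by funext i; simp⟩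
  smul_mem' := by
    rintro c a ⟨f, hf, rfl⟩
    exact ⟨c • f, lt_of_le_of_lt (Polynomial.degree_smul_le c f) hf,
      by funext i; simp [Polynomial.eval_smul]; ring⟩

theorem Lagrange.coeff_eq_sum_eval_div_eval_derivative_nodal {F ι : Type*} [Field F]
    [DecidableEq ι] {s : Finset ι} {v : ι → F} (hvs : Set.InjOn v s) {P : F[X]}
    (hP : P.degree < #s) :
    P.coeff (#s - 1) = ∑ i ∈ s, P.eval (v i) / (derivative (nodal s v)).eval (v i) := by
  rw [coeff_eq_sum hvs hP]
  refine sum_congr rfl fun i hi => ?_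
  rw [eval_nodal_derivative_eval_node_eq hi, eval_nodal]

theorem Lagrange.eval_derivative_nodal_ne_zero {F ι : Type*} [Field F] [DecidableEq ι]
    {s : Finset ι} {v : ι → F} (hvs : Set.InjOn v s) {i : ι} (hi : i ∈ s) :
    (derivative (nodal s v)).eval (v i) ≠ 0 := by
  simpa [nodalWeight_eq_eval_derivative_nodal hi] using nodalWeight_ne_zero hvs hi

theorem prod_X_sub_C_dvd_iff_forall_eval_eq_zero {F ι : Type*} [Field F] [Fintype ι]
    {α : ι → F} (hα : Function.Injective α) (P : F[X]) :
    (∏ i, (X - C (α i))) ∣ P ↔ ∀ i, P.eval (α i) = 0 := by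
  refine ⟨fun hP i => ?_, fun hP => ?_⟩
  · exact eval_eq_zero_of_dvd_of_eval_eq_zero hP (by simp [eval_prod, prod_eq_zero (mem_univ i)])
  · exact Fintype.prod_dvd_of_coprime (pairwise_coprime_X_sub_C hα)
      fun i => dvd_iff_isRoot.mpr (hP i)

section GRSDual

variable {F : Type*} [Field F] {n : ℕ} {α v : Fin n → F}

noncomputable def GRSDualWeight (α v : Fin n → F) (i : Fin n) : F :=
  (v i * (derivative (Lagrange.nodal univ α)).eval (α i))⁻¹

theorem sum_GRSDualWeight_mul_eq_coeff (hα : Function.Injective α) (hv : ∀ i, v i ≠ 0)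
    {g p : F[X]} (hgp : (g * p).degree < n) :
    ∑ i, GRSDualWeight α v i * g.eval (α i) * (v i * p.eval (α i)) = (g * p).coeff (n - 1) := by
  have hcoeff := Lagrange.coeff_eq_sum_eval_div_eval_derivative_nodal (s := univ) hα.injOn
    (by rwa [card_fin])
  rw [card_fin] at hcoeff
  rw [hcoeff]
  refine sum_congr rfl fun i _ => ?_
  have hvi := hv i
  rw [GRSDualWeight, eval_mul]
  field_simp

theorem GRSCode_le_dualCode_GRSCode (hα : Function.Injective α) (hv : ∀ i, v i ≠ 0) (k : ℕ) :
    GRSCode (n - k) α (GRSDualWeight α v) ≤ dualCode (GRSCode k α v) := by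
  rintro _ ⟨g, hg, rfl⟩ _ ⟨p, hp, rfl⟩
  have hgp : (g * p).degree < (n - 1 : ℕ) := by
    rcases eq_or_ne g 0 with rfl | hg0
    · simp
    rcases eq_or_ne p 0 with rfl | hp0
    · simp
    rw [← natDegree_lt_iff_degree_lt (mul_ne_zero hg0 hp0), natDegree_mul hg0 hp0]
    rw [← natDegree_lt_iff_degree_lt hg0] at hg
    rw [← natDegree_lt_iff_degree_lt hp0] at hp
    omega
  rw [sum_GRSDualWeight_mul_eq_coeff hα hv (hgp.trans_le (by exact_mod_cast n.sub_le 1))]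
  exact coeff_eq_zero_of_degree_lt hgp

theorem dualCode_GRSCode_le_GRSCode (hα : Function.Injective α) (hv : ∀ i, v i ≠ 0) (k : ℕ) :
    dualCode (GRSCode k α v) ≤ GRSCode (n - k) α (GRSDualWeight α v) := by
  intro c hc
  have hw (i : Fin n) : GRSDualWeight α v i ≠ 0 :=
    inv_ne_zero (mul_ne_zero (hv i)
      (Lagrange.eval_derivative_nodal_ne_zero hα.injOn (mem_univ i)))
  obtain ⟨g, hgn, hgc⟩ :
      ∃ g : F[X], g.degree < n ∧ c = fun i => GRSDualWeight α v i * g.eval (α i) :=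
    ⟨Lagrange.interpolate univ α fun i => c i / GRSDualWeight α v i,
      by simpa using Lagrange.degree_interpolate_lt (s := univ) _ hα.injOn,
      funext fun i => by
        rw [Lagrange.eval_interpolate_at_node _ hα.injOn (mem_univ i), mul_div_cancel₀ _ (hw i)]⟩
  refine ⟨g, ?_, hgc⟩
  by_contra! hdeg
  have hg0 : g ≠ 0 := by rintro rfl; simp at hdeg
  have hdk := le_natDegree_of_coe_le_degree hdeg
  have hdn := (natDegree_lt_iff_degree_lt hg0).mpr hgn
  -- pairing with `X ^ e`, where `deg g + e = n - 1`, reads off the leading coefficient of `g`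
  obtain ⟨e, he⟩ : ∃ e, n - 1 = g.natDegree + e := ⟨n - 1 - g.natDegree, by omega⟩
  have horth := hc _ ⟨X ^ e, by rw [degree_X_pow]; exact_mod_cast (by omega : e < k), rfl⟩
  have hgX : (g * X ^ e).degree < (n : WithBot ℕ) := by
    rw [degree_mul_X_pow, degree_eq_natDegree hg0]
    exact_mod_cast (by omega : g.natDegree + e < n)
  rw [hgc, sum_GRSDualWeight_mul_eq_coeff hα hv hgX, he, coeff_mul_X_pow] at horth
  exact hg0 (leadingCoeff_eq_zero.mp horth)

theorem dualCode_GRSCode (hα : Function.Injective α) (hv : ∀ i, v i ≠ 0) (k : ℕ) :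
    dualCode (GRSCode k α v) = GRSCode (n - k) α (GRSDualWeight α v) :=
  le_antisymm (dualCode_GRSCode_le_GRSCode hα hv k) (GRSCode_le_dualCode_GRSCode hα hv k)

end GRSDual

theorem mem_hull_iff_exists_g_general {F : Type*} [Field F] {n : ℕ}
    (α : Fin n → F) (hα : Function.Injective α)
    (h : Polynomial F) (hh : h = ∏ i, (Polynomial.X - Polynomial.C (α i)))
    (s t : Polynomial F)
    (hs : ∀ i, s.eval (α i) ≠ 0) (ht : ∀ i, t.eval (α i) ≠ 0)
    (hst : ∀ i, s.eval (α i) * t.eval (α i) = (Polynomial.derivative h).eval (α i))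
    (v : Fin n → F) (hv : ∀ i, v i = (s.eval (α i))⁻¹)
    (k : ℕ)
    (f : Polynomial F) (hf : f.degree < k) :
    (fun i => v i * f.eval (α i)) ∈ GRSCode k α v ⊓ dualCode (GRSCode k α v) ↔
      ∃ g : Polynomial F, g.degree < ((n - k : ℕ) : WithBot ℕ) ∧ h ∣ f * t - g * s := by
  have hv0 (i : Fin n) : v i ≠ 0 := hv i ▸ inv_ne_zero (hs i)
  have hweight : GRSDualWeight α v = fun i => (t.eval (α i))⁻¹ := by
    funext i
    rw [GRSDualWeight, Lagrange.nodal_eq, ← hh, ← hst i, hv i, inv_mul_cancel_left₀ (hs i)]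
  rw [Submodule.mem_inf, and_iff_right ⟨f, hf, rfl⟩, dualCode_GRSCode hα hv0, hweight]
  refine exists_congr fun g => and_congr_right fun _ => ?_
  rw [hh, prod_X_sub_C_dvd_iff_forall_eval_eq_zero hα, funext_iff]
  refine forall_congr' fun i => ?_
  rw [hv i, eval_sub, eval_mul, eval_mul, sub_eq_zero, inv_mul_eq_inv_mul_iff (hs i) (ht i)]

theorem mem_hull_iff_exists_g {F : Type*} [Field F] {n : ℕ}
    (α : Fin n → F) (hα : Function.Injective α)
    (h : Polynomial F) (hh : h = ∏ i, (Polynomial.X - Polynomial.C (α i)))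
    (s t : Polynomial F)
    (hs : ∀ i, s.eval (α i) ≠ 0) (ht : ∀ i, t.eval (α i) ≠ 0)
    (hst : ∀ i, s.eval (α i) * t.eval (α i) = (Polynomial.derivative h).eval (α i))
    (v : Fin n → F) (hv : ∀ i, v i = (s.eval (α i))⁻¹)
    (k : ℕ) (hk : 1 ≤ k) (hkn : k < n)
    (f : Polynomial F) (hf : f.degree < k) :
    (fun i => v i * f.eval (α i)) ∈ GRSCode k α v ⊓ dualCode (GRSCode k α v) ↔
      ∃ g : Polynomial F, g.degree < ((n - k : ℕ) : WithBot ℕ) ∧ h ∣ f * t - g * s :=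
  mem_hull_iff_exists_g_general α hα h hh s t hs ht hst v hv k f hf
end

section
/- Let s(z), t(z) ∈ F_q[z] be nonzero polynomials and f(z), g(z) ∈ F_q[z] with deg f ≤ k-1 and deg g ≤ n-k-1, where deg s + deg t = n + ε and ε ≥ -1. If f(z)t(z) = g(z)s(z) and deg s ≤ k + ε - deg(gcd(s,t)) - 1, then f = g = 0. -/
open Polynomial

open Classical in
theorem eq_zero_of_cross_eq {F : Type*} [Field F]
    (s t f g : Polynomial F) (k n : ℕ) (ε : ℤ)
    (hk : 1 ≤ k) (hkn : k < n) (hs : s ≠ 0) (ht : t ≠ 0)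
    (hf : f.degree < (k : WithBot ℕ)) (hg : g.degree < ((n - k : ℕ) : WithBot ℕ))
    (hst : (s.natDegree : ℤ) + (t.natDegree : ℤ) = (n : ℤ) + ε) (hε : -1 ≤ ε)
    (hdeg : (s.natDegree : ℤ) ≤ (k : ℤ) + ε - ((EuclideanDomain.gcd s t).natDegree : ℤ) - 1)
    (heq : f * t = g * s) : f = 0 ∧ g = 0 := by
  set d := EuclideanDomain.gcd s t with hd_def
  have hd : d ≠ 0 := by
    intro h
    exact hs ((EuclideanDomain.gcd_eq_zero_iff.mp h)).1
  set s' := s / d with hs'_def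
  set t' := t / d with ht'_def
  have hsd : d * s' = s := EuclideanDomain.mul_div_cancel' hd (EuclideanDomain.gcd_dvd_left s t)
  have htd : d * t' = t := EuclideanDomain.mul_div_cancel' hd (EuclideanDomain.gcd_dvd_right s t)
  have hcop : IsCoprime s' t' := by
    apply EuclideanDomain.gcd_isUnit_iff.mp
    have h1 : d * EuclideanDomain.gcd s' t' ∣ s := by
      rw [← hsd]; exact mul_dvd_mul_left d (EuclideanDomain.gcd_dvd_left _ _)
    have h2 : d * EuclideanDomain.gcd s' t' ∣ t := by
      rw [← htd]; exact mul_dvd_mul_left d (EuclideanDomain.gcd_dvd_right _ _)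
    have h3 : d * EuclideanDomain.gcd s' t' ∣ d * 1 := by
      rw [mul_one]; exact EuclideanDomain.dvd_gcd h1 h2
    exact isUnit_of_dvd_one ((mul_dvd_mul_iff_left hd).mp h3)
  have ht' : t' ≠ 0 := by
    intro h; apply ht; rw [← htd, h, mul_zero]
  have hkey : f * t' = g * s' := by
    have : d * (f * t') = d * (g * s') := by
      rw [show d * (f * t') = f * (d * t') by ring, show d * (g * s') = g * (d * s') by ring,
        hsd, htd, heq]
    exact mul_left_cancel₀ hd this
  have hg0 : g = 0 := by
    by_contra hg0
    have hdvd : t' ∣ g := by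
      apply (hcop.symm).dvd_of_dvd_mul_right
      exact ⟨f, by rw [← hkey]; ring⟩
    have h1 : t'.natDegree ≤ g.natDegree := Polynomial.natDegree_le_of_dvd hdvd hg0
    have h2 : g.natDegree < n - k := by
      exact (Polynomial.natDegree_lt_iff_degree_lt hg0).mpr hg
    have h3 : t.natDegree = d.natDegree + t'.natDegree := by
      rw [← htd, Polynomial.natDegree_mul hd ht']
    have hnk : k ≤ n := le_of_lt hkn
    have h2' : (g.natDegree : ℤ) < (n : ℤ) - (k : ℤ) := by
      have := Nat.cast_lt (α := ℤ) |>.mpr h2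
      push_cast at this ⊢
      omega
    have h3' : (t.natDegree : ℤ) = (d.natDegree : ℤ) + (t'.natDegree : ℤ) := by
      exact_mod_cast h3
    have h1' : (t'.natDegree : ℤ) ≤ (g.natDegree : ℤ) := by exact_mod_cast h1
    omega
  have hf0 : f = 0 := by
    have : f * t = 0 := by rw [heq, hg0, zero_mul]
    rcases mul_eq_zero.mp this with h | h
    · exact h
    · exact absurd h ht
  exact ⟨hf0, hg0⟩
end

section
/- Let α_1,…,α_n ∈ F_q be distinct with n = 2k, h(z) = Π(z - α_i), and suppose there exist λ ∈ F_q^*, u(z) ∈ F_q[z] nonzero with deg u ≤ n-2, and s(z) ∈ F_q[z] with s(α_i) ≠ 0 for all i, such that λ s(z)^2 = u(z)h(z) + h'(z) and 2·deg s ≥ 2k + deg u. Then, with v_i = s(α_i)^{-1}, the code GRS_k(α, v) is self-dual, i.e., GRS_k(α, v) = GRS_k(α, v)^⊥. -/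
open Polynomial Finset

open Lagrange

/-!
Write `w_i = ∏_{j ≠ i} (α_i - α_j)⁻¹ = h'(α_i)⁻¹`. Evaluating `λ s² = u h + h'` at the nodes
gives `v_i² = λ w_i`. Lagrange interpolation turns the weighted sum `∑ w_i P(α_i)` into the
coefficient of `z^{n-1}` of any `P` of degree `< n`, so the pairing of the codewords of `f` and
`g` is `λ · [z^{n-1}] (f g)`. For `deg f, deg g < k` this vanishes since `2k ≤ n`; conversely a
word orthogonal to the code comes from some `g` of degree `< n`, and if `deg g ≥ k` then pairing
it with `z^{n-1-deg g}` (of degree `< k` because `n ≤ 2k`) picks out `λ` times its leading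
coefficient.
-/

theorem Lagrange.coeff_eq_sum_eval_mul_nodalWeight {F ι : Type*} [Field F] [DecidableEq ι]
    {s : Finset ι} {v : ι → F} (hvs : Set.InjOn v s) {P : F[X]} (hP : P.degree < #s) :
    P.coeff (#s - 1) = ∑ i ∈ s, P.eval (v i) * nodalWeight s v i := by
  rw [coeff_eq_sum hvs hP]
  refine sum_congr rfl fun i _ => ?_
  rw [nodalWeight, prod_inv_distrib, div_eq_mul_inv]

theorem Polynomial.degree_mul_lt_of_degree_lt {R : Type*} [Semiring R] [NoZeroDivisors R]
    {f g : R[X]} {k l : ℕ} (hf : f.degree < k) (hg : g.degree < l) :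
    (f * g).degree < (k + l - 1 : ℕ) := by
  rcases eq_or_ne f 0 with rfl | hf0
  · simp
  rcases eq_or_ne g 0 with rfl | hg0
  · simp
  rw [degree_eq_natDegree hf0, Nat.cast_lt] at hf
  rw [degree_eq_natDegree hg0, Nat.cast_lt] at hg
  rw [degree_mul, degree_eq_natDegree hf0, degree_eq_natDegree hg0, ← Nat.cast_add, Nat.cast_lt]
  omega

section GRS

variable {F : Type*} [Field F] {n k : ℕ} {α v : Fin n → F} {c : F}

theorem GRSCode_eq_top (hα : Function.Injective α) (hv : ∀ i, v i ≠ 0) :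
    GRSCode n α v = ⊤ := by
  refine eq_top_iff.mpr fun x _ => ⟨interpolate univ α fun i => x i / v i, ?_, ?_⟩
  · simpa using degree_interpolate_lt (s := univ) (fun i => x i / v i) hα.injOn
  · funext i
    rw [eval_interpolate_at_node _ hα.injOn (mem_univ i), mul_div_cancel₀ _ (hv i)]

variable (hα : Function.Injective α) (hv : ∀ i, v i ^ 2 = c * nodalWeight univ α i)
include hα hv

theorem sum_GRS_mul_GRS_eq_coeff {f g : F[X]} (hfg : (f * g).degree < n) :
    ∑ i, v i * f.eval (α i) * (v i * g.eval (α i)) = c * (f * g).coeff (n - 1) := by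
  have hcoeff := coeff_eq_sum_eval_mul_nodalWeight (s := univ) hα.injOn (P := f * g)
    (by simpa using hfg)
  rw [card_univ, Fintype.card_fin] at hcoeff
  rw [hcoeff, mul_sum]
  refine sum_congr rfl fun i _ => ?_
  rw [eval_mul]
  linear_combination (f.eval (α i) * g.eval (α i)) * hv i

theorem GRSCode_le_dualCode (hkn : 2 * k ≤ n) : GRSCode k α v ≤ dualCode (GRSCode k α v) := by
  rintro _ ⟨f, hf, rfl⟩ _ ⟨g, hg, rfl⟩
  have hfg : (f * g).degree < (n - 1 : ℕ) :=
    (degree_mul_lt_of_degree_lt hf hg).trans_le (by norm_cast; omega)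
  rw [sum_GRS_mul_GRS_eq_coeff hα hv (hfg.trans_le (by norm_cast; omega)),
    coeff_eq_zero_of_degree_lt hfg, mul_zero]

theorem dualCode_le_GRSCode (hc : c ≠ 0) (hnk : n ≤ 2 * k) :
    dualCode (GRSCode k α v) ≤ GRSCode k α v := by
  intro x hx
  have hv0 (i : Fin n) : v i ≠ 0 := by
    have := mul_ne_zero hc (nodalWeight_ne_zero hα.injOn (mem_univ i))
    rw [← hv i] at this
    exact (pow_ne_zero_iff two_ne_zero).mp this
  obtain ⟨g, hgn, rfl⟩ : x ∈ GRSCode n α v := by rw [GRSCode_eq_top hα hv0]; trivial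
  refine ⟨g, ?_, rfl⟩
  by_contra! hkg
  have hg0 : g ≠ 0 := by rintro rfl; simp at hkg
  rw [degree_eq_natDegree hg0, Nat.cast_le] at hkg
  rw [degree_eq_natDegree hg0, Nat.cast_lt] at hgn
  set m := n - 1 - g.natDegree
  have hXm : (fun i => v i * (X ^ m : F[X]).eval (α i)) ∈ GRSCode k α v :=
    ⟨X ^ m, by rw [degree_X_pow, Nat.cast_lt]; omega, rfl⟩
  have hdeg : (g * X ^ m).degree < (n : WithBot ℕ) := by
    rw [degree_mul, degree_X_pow, degree_eq_natDegree hg0, ← Nat.cast_add, Nat.cast_lt]; omega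
  have hpair := hx _ hXm
  rw [sum_GRS_mul_GRS_eq_coeff hα hv hdeg, show n - 1 = g.natDegree + m by omega,
    coeff_mul_X_pow] at hpair
  exact mul_ne_zero hc (leadingCoeff_ne_zero.mpr hg0) hpair

end GRS

theorem GRSCode_selfDual_general {F : Type*} [Field F] {n : ℕ}
    (α : Fin n → F) (hα : Function.Injective α)
    (h : Polynomial F) (hh : h = ∏ i, (Polynomial.X - Polynomial.C (α i)))
    (k : ℕ) (hn2k : n = 2 * k)
    (lam : F) (hlam : lam ≠ 0)
    (u : Polynomial F)
    (s : Polynomial F)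
    (heq : Polynomial.C lam * s ^ 2 = u * h + Polynomial.derivative h)
    (v : Fin n → F) (hv : ∀ i, v i = (s.eval (α i))⁻¹) :
    GRSCode k α v = dualCode (GRSCode k α v) := by
  have hnodal : h = nodal univ α := hh
  have hv_sq (i : Fin n) : v i ^ 2 = lam * nodalWeight univ α i := by
    have hder : (derivative h).eval (α i) = lam * s.eval (α i) ^ 2 := by
      simpa [hnodal, eval_nodal_at_node] using (congrArg (eval (α i)) heq).symm
    rw [nodalWeight_eq_eval_derivative_nodal (mem_univ i), ← hnodal, hder, hv, mul_inv,
      ← mul_assoc, mul_inv_cancel₀ hlam, one_mul, inv_pow]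
  exact le_antisymm (GRSCode_le_dualCode hα hv_sq hn2k.ge)
    (dualCode_le_GRSCode hα hv_sq hlam hn2k.le)

theorem GRSCode_selfDual {F : Type*} [Field F] {n : ℕ}
    (α : Fin n → F) (hα : Function.Injective α)
    (h : Polynomial F) (hh : h = ∏ i, (Polynomial.X - Polynomial.C (α i)))
    (k : ℕ) (hk : 1 ≤ k) (hn2k : n = 2 * k)
    (lam : F) (hlam : lam ≠ 0)
    (u : Polynomial F) (hu0 : u ≠ 0) (hudeg : u.degree ≤ ((n - 2 : ℕ) : WithBot ℕ))
    (s : Polynomial F) (hs : ∀ i, s.eval (α i) ≠ 0)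
    (heq : Polynomial.C lam * s ^ 2 = u * h + Polynomial.derivative h)
    (hsdeg : 2 * k + u.natDegree ≤ 2 * s.natDegree)
    (v : Fin n → F) (hv : ∀ i, v i = (s.eval (α i))⁻¹) :
    GRSCode k α v = dualCode (GRSCode k α v) :=
  GRSCode_selfDual_general α hα h hh k hn2k lam hlam u s heq v hv
end

section
/- Let α_1,…,α_n ∈ F_q be distinct, h(z) = Π(z - α_i), and suppose there exist λ(z), u(z), s(z) ∈ F_q[z] with s(α_i) ≠ 0 for all i, such that λ(z)s(z)^2 = u(z)h(z) + h'(z). Let v_i = s(α_i)^{-1} and let ε = deg u if u ≠ 0 and ε = -1 if u = 0. If k + ε/2 ≤ deg s(z), then GRS_k(α, v) is self-orthogonal: GRS_k(α, v) ⊆ GRS_k(α, v)^⊥. -/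
open Polynomial Finset

/-!
Evaluating `λ s² = u h + h'` at a root `αᵢ` of `h` gives `vᵢ² = λ(αᵢ) / h'(αᵢ)`, so the inner product
of the codewords of `f` and `g` is `∑ᵢ (f g λ)(αᵢ) / h'(αᵢ)`. By Lagrange interpolation this sum is
the coefficient of `z ^ (n - 1)` in `f g λ`. Comparing degrees in `λ s² = u h + h'` and using
`2k + ε ≤ 2 deg s` gives `deg λ ≤ n - 2k`, hence `deg (f g λ) ≤ n - 2` and the sum vanishes.
-/

namespace Lagrange

variable {F ι : Type*} [Field F] [DecidableEq ι] {s : Finset ι} {v : ι → F}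

theorem eval_derivative_nodal_ne_zero_s17 (hvs : Set.InjOn v s) {i : ι} (hi : i ∈ s) :
    (derivative (nodal s v)).eval (v i) ≠ 0 := by
  simpa [nodalWeight_eq_eval_derivative_nodal hi] using nodalWeight_ne_zero hvs hi

theorem sum_eval_div_eval_derivative_nodal_eq_zero (hvs : Set.InjOn v s) {P : F[X]}
    (hP : P.degree < ↑(#s - 1)) :
    ∑ i ∈ s, P.eval (v i) / (derivative (nodal s v)).eval (v i) = 0 := calc
  _ = ∑ i ∈ s, P.eval (v i) / ∏ j ∈ s.erase i, (v i - v j) :=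
      sum_congr rfl fun i hi => by rw [eval_nodal_derivative_eval_node_eq hi, eval_nodal]
  _ = P.coeff (#s - 1) :=
      (coeff_eq_sum hvs (hP.trans_le (WithBot.coe_le_coe.mpr (Nat.sub_le _ _)))).symm
  _ = 0 := coeff_eq_zero_of_degree_lt hP

end Lagrange

section KeyEquation

variable {F : Type*} [Field F] {lam u s h : F[X]}

theorem inv_eval_sq_eq_eval_div_eval_derivative
    (heq : lam * s ^ 2 = u * h + derivative h) {x : F} (hx : h.IsRoot x)
    (hs : s.eval x ≠ 0) (hd : (derivative h).eval x ≠ 0) :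
    (s.eval x)⁻¹ ^ 2 = lam.eval x / (derivative h).eval x := by
  have hevalx : lam.eval x * s.eval x ^ 2 = (derivative h).eval x := by
    simpa [hx.eq_zero] using congrArg (eval x) heq
  field_simp
  linear_combination -hevalx

open Classical in
theorem natDegree_add_two_mul_le_of_mul_sq_eq (hh : h ≠ 0)
    (heq : lam * s ^ 2 = u * h + derivative h) (hlam : lam ≠ 0) (hs : s ≠ 0)
    {k : ℕ} {ε : ℤ} (hε : ε = if u = 0 then -1 else (u.natDegree : ℤ))
    (hsdeg : 2 * (k : ℤ) + ε ≤ 2 * (s.natDegree : ℤ)) :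
    lam.natDegree + 2 * k ≤ h.natDegree := by
  have hlhs : (lam * s ^ 2).natDegree = lam.natDegree + 2 * s.natDegree := by
    rw [natDegree_mul hlam (pow_ne_zero _ hs), natDegree_pow, mul_comm]
  by_cases hu : u = 0
  · have hder : (derivative h).natDegree ≤ h.natDegree - 1 := natDegree_derivative_le h
    rw [heq, hu, zero_mul, zero_add] at hlhs
    rw [if_pos hu] at hε
    omega
  · have hlt : (derivative h).degree < (u * h).degree :=
      (degree_derivative_lt hh).trans_le (mul_comm u h ▸ degree_le_mul_left h hu)
    rw [heq, natDegree_add_eq_left_of_degree_lt hlt, natDegree_mul hu hh] at hlhs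
    rw [if_neg hu] at hε
    omega

end KeyEquation

theorem degree_mul_mul_lt_of_natDegree_add_two_mul_le {F : Type*} [Field F] {f g lam : F[X]}
    {k m : ℕ} (hf : f.degree < k) (hg : g.degree < k) (hlam : lam.natDegree + 2 * k ≤ m) :
    (f * g * lam).degree < ↑(m - 1) := by
  rcases eq_or_ne (f * g * lam) 0 with h0 | h0
  · rw [h0, degree_zero]
    exact WithBot.bot_lt_coe _
  obtain ⟨⟨hf0, hg0⟩, hlam0⟩ : (f ≠ 0 ∧ g ≠ 0) ∧ lam ≠ 0 := by simpa using h0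
  have hfk := (natDegree_lt_iff_degree_lt hf0).mpr hf
  have hgk := (natDegree_lt_iff_degree_lt hg0).mpr hg
  rw [← natDegree_lt_iff_degree_lt h0, natDegree_mul (mul_ne_zero hf0 hg0) hlam0,
    natDegree_mul hf0 hg0]
  omega

open Classical in
theorem GRSCode_selfOrthogonal_general {F : Type*} [Field F] {n : ℕ}
    (α : Fin n → F) (hα : Function.Injective α)
    (h : Polynomial F) (hh : h = ∏ i, (Polynomial.X - Polynomial.C (α i)))
    (k : ℕ) (hkn : k < n)
    (lam u s : Polynomial F) (hs : ∀ i, s.eval (α i) ≠ 0)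
    (heq : lam * s ^ 2 = u * h + Polynomial.derivative h)
    (ε : ℤ) (hε : ε = if u = 0 then -1 else (u.natDegree : ℤ))
    (hsdeg : 2 * (k : ℤ) + ε ≤ 2 * (s.natDegree : ℤ))
    (v : Fin n → F) (hv : ∀ i, v i = (s.eval (α i))⁻¹) :
    GRSCode k α v ≤ dualCode (GRSCode k α v) := by
  have hnodal : h = Lagrange.nodal univ α := hh
  have hinj : Set.InjOn α (univ : Finset (Fin n)) := hα.injOn
  have hd (i) : (derivative h).eval (α i) ≠ 0 :=
    hnodal ▸ Lagrange.eval_derivative_nodal_ne_zero_s17 hinj (mem_univ i)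
  have hweight (i) : v i ^ 2 = lam.eval (α i) / (derivative h).eval (α i) :=
    hv i ▸ inv_eval_sq_eq_eval_div_eval_derivative heq
      (hnodal ▸ Lagrange.eval_nodal_at_node (mem_univ i)) (hs i) (hd i)
  let i₀ : Fin n := ⟨0, by omega⟩
  have hlam : lam ≠ 0 := by
    rintro rfl
    simpa [hv, hs] using hweight i₀
  have hs0 : s ≠ 0 := by
    rintro rfl
    exact hs i₀ eval_zero
  have hdeg : lam.natDegree + 2 * k ≤ n := by
    simpa [hnodal, Lagrange.natDegree_nodal] using
      natDegree_add_two_mul_le_of_mul_sq_eq (hnodal ▸ Lagrange.nodal_monic.ne_zero) heq hlam hs0 hε hsdeg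
  rintro _ ⟨f, hf, rfl⟩ _ ⟨g, hg, rfl⟩
  calc ∑ i, v i * f.eval (α i) * (v i * g.eval (α i))
      = ∑ i, (f * g * lam).eval (α i) / (derivative h).eval (α i) :=
        sum_congr rfl fun i _ => by rw [eval_mul, eval_mul, mul_div_assoc, ← hweight i]; ring
    _ = 0 := by
        rw [hnodal]
        exact Lagrange.sum_eval_div_eval_derivative_nodal_eq_zero hinj
          (by simpa using degree_mul_mul_lt_of_natDegree_add_two_mul_le hf hg hdeg)

open Classical in
theorem GRSCode_selfOrthogonal {F : Type*} [Field F] {n : ℕ}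
    (α : Fin n → F) (hα : Function.Injective α)
    (h : Polynomial F) (hh : h = ∏ i, (Polynomial.X - Polynomial.C (α i)))
    (k : ℕ) (hk : 1 ≤ k) (hkn : k < n)
    (lam u s : Polynomial F) (hs : ∀ i, s.eval (α i) ≠ 0)
    (heq : lam * s ^ 2 = u * h + Polynomial.derivative h)
    (ε : ℤ) (hε : ε = if u = 0 then -1 else (u.natDegree : ℤ))
    (hsdeg : 2 * (k : ℤ) + ε ≤ 2 * (s.natDegree : ℤ))
    (v : Fin n → F) (hv : ∀ i, v i = (s.eval (α i))⁻¹) :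
    GRSCode k α v ≤ dualCode (GRSCode k α v) :=
  GRSCode_selfOrthogonal_general α hα h hh k hkn lam u s hs heq ε hε hsdeg v hv
end

section
/- Let α_1,…,α_n ∈ F_q be distinct, h(z) = Π(z-α_i), and s(z), t(z) ∈ F_q[z] with s(α_i)t(α_i) = h'(α_i) ≠ 0 for all i, and let v_i = s(α_i)^{-1}. If t | s, say s = t·m, and deg m + (n-k-1) ≤ k - 1, then GRS_k(α, v) is dual-containing, i.e. GRS_k(α, v)^⊥ ⊆ GRS_k(α, v). -/
open Polynomial Finset

lemma coeff_basis_top {F : Type*} [Field F] {n : ℕ} (α : Fin n → F)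
    (hα : Function.Injective α) (i : Fin n) :
    (Lagrange.basis Finset.univ α i).coeff (n - 1) =
      (∏ j ∈ Finset.univ.erase i, (α i - α j))⁻¹ := by
  have hinj : Set.InjOn α (Finset.univ : Finset (Fin n)) := hα.injOn
  have hnd := Lagrange.natDegree_basis hinj (Finset.mem_univ i)
  rw [Finset.card_univ, Fintype.card_fin] at hnd
  rw [← hnd, Polynomial.coeff_natDegree, Lagrange.basis, Polynomial.leadingCoeff_prod,
    ← Finset.prod_inv_distrib]
  refine Finset.prod_congr rfl fun j hj => ?_
  have hij : α i - α j ≠ 0 := by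
    have : j ≠ i := (Finset.mem_erase.mp hj).1
    exact sub_ne_zero_of_ne (fun hc => this (hα hc).symm)
  rw [Lagrange.basisDivisor, Polynomial.leadingCoeff_mul, Polynomial.leadingCoeff_C,
    (Polynomial.monic_X_sub_C (α j)).leadingCoeff, mul_one]

lemma coeff_top_eq_sum {F : Type*} [Field F] {n : ℕ} (α : Fin n → F)
    (hα : Function.Injective α) (P : Polynomial F) (hP : P.degree < (n : WithBot ℕ)) :
    P.coeff (n - 1) =
      ∑ i, P.eval (α i) * (∏ j ∈ Finset.univ.erase i, (α i - α j))⁻¹ := by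
  have hinj : Set.InjOn α (Finset.univ : Finset (Fin n)) := hα.injOn
  have hP' : P.degree < (#(Finset.univ : Finset (Fin n)) : WithBot ℕ) := by
    rwa [Finset.card_univ, Fintype.card_fin]
  conv_lhs => rw [Lagrange.eq_interpolate hinj hP']
  rw [Lagrange.interpolate_apply, Polynomial.finset_sum_coeff]
  exact Finset.sum_congr rfl fun i _ => by
    rw [Polynomial.coeff_C_mul, coeff_basis_top α hα i]

theorem GRSCode_dualContaining {F : Type*} [Field F] {n : ℕ}
    (α : Fin n → F) (hα : Function.Injective α)
    (h : Polynomial F) (hh : h = ∏ i, (Polynomial.X - Polynomial.C (α i)))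
    (s t m : Polynomial F)
    (hs : ∀ i, s.eval (α i) ≠ 0) (ht : ∀ i, t.eval (α i) ≠ 0)
    (hst : ∀ i, s.eval (α i) * t.eval (α i) = (Polynomial.derivative h).eval (α i))
    (k : ℕ) (hk : 1 ≤ k) (hkn : k < n)
    (hm : s = t * m) (hdeg : m.natDegree + (n - k - 1) ≤ k - 1)
    (v : Fin n → F) (hv : ∀ i, v i = (s.eval (α i))⁻¹) :
    dualCode (GRSCode k α v) ≤ GRSCode k α v := by
  intro x hx
  have hx' : ∀ y ∈ GRSCode k α v, ∑ i, x i * y i = 0 := hx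
  have hinj : Set.InjOn α (Finset.univ : Finset (Fin n)) := hα.injOn
  -- h'(α i) = ∏_{j ≠ i} (α i - α j)
  have hC : ∀ i, (Polynomial.derivative h).eval (α i) =
      ∏ j ∈ Finset.univ.erase i, (α i - α j) := by
    intro i
    rw [hh, ← Lagrange.nodal_eq,
      Lagrange.eval_nodal_derivative_eval_node_eq (Finset.mem_univ i), Lagrange.eval_nodal]
  set g : Polynomial F := Lagrange.interpolate Finset.univ α (fun i => x i * t.eval (α i))
    with hg
  have hgdeg : g.degree < (n : WithBot ℕ) := by
    have := Lagrange.degree_interpolate_lt (fun i => x i * t.eval (α i)) hinj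
    rwa [Finset.card_univ, Fintype.card_fin] at this
  have hgeval : ∀ i, g.eval (α i) = x i * t.eval (α i) := fun i =>
    Lagrange.eval_interpolate_at_node _ hinj (Finset.mem_univ i)
  have hcoeff_ge : ∀ e, n ≤ e → g.coeff e = 0 := fun e he =>
    Polynomial.coeff_eq_zero_of_degree_lt (lt_of_lt_of_le hgdeg (by exact_mod_cast he))
  -- main argument
  have main : ∀ d, n - k ≤ d → d ≤ n - 1 → (∀ e, d < e → g.coeff e = 0) → g.coeff d = 0 := by
    intro d hd1 hd2 hcoeffs
    have hnatg : g.natDegree ≤ d := Polynomial.natDegree_le_iff_coeff_eq_zero.mpr hcoeffs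
    set e := n - 1 - d with he
    set P := g * Polynomial.X ^ e with hP
    have hPnat : P.natDegree ≤ n - 1 := by
      calc P.natDegree ≤ g.natDegree + (Polynomial.X ^ e : Polynomial F).natDegree :=
            Polynomial.natDegree_mul_le
        _ ≤ d + e := by rw [Polynomial.natDegree_X_pow]; omega
        _ ≤ n - 1 := by omega
    have hPdeg : P.degree < (n : WithBot ℕ) :=
      lt_of_le_of_lt Polynomial.degree_le_natDegree (by exact_mod_cast (by omega : P.natDegree < n))
    have hPd : P.coeff (n - 1) = g.coeff d := by
      have : n - 1 = d + e := by omega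
      rw [this, hP, Polynomial.coeff_mul_X_pow]
    rw [← hPd, coeff_top_eq_sum α hα P hPdeg]
    have hXk : (Polynomial.X ^ e : Polynomial F).degree < (k : WithBot ℕ) := by
      rw [Polynomial.degree_X_pow]
      exact_mod_cast (by omega : e < k)
    have hmem : (fun i => v i * (Polynomial.X ^ e : Polynomial F).eval (α i)) ∈
        GRSCode k α v := ⟨Polynomial.X ^ e, hXk, rfl⟩
    have horth := hx' _ hmem
    rw [← horth]
    refine Finset.sum_congr rfl fun i _ => ?_
    rw [hP, Polynomial.eval_mul, Polynomial.eval_pow, Polynomial.eval_X, hgeval i,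
      ← hC i, ← hst i, hv i, mul_inv]
    have h1 := ht i
    have h2 := hs i
    field_simp
  -- downward induction
  have key : ∀ j d, n - k ≤ d → n - 1 ≤ d + j → g.coeff d = 0 := by
    intro j
    induction j with
    | zero =>
      intro d h1 h2
      rcases lt_or_ge d n with hdn | hdn
      · exact main d h1 (by omega) (fun e he => hcoeff_ge e (by omega))
      · exact hcoeff_ge d hdn
    | succ j ih =>
      intro d h1 h2
      rcases le_or_gt n d with hdn | hdn
      · exact hcoeff_ge d hdn
      · refine main d h1 (by omega) (fun e he => ?_)
        rcases le_or_gt n e with hen | hen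
        · exact hcoeff_ge e hen
        · exact ih e (by omega) (by omega)
  have hgnat : g.natDegree ≤ n - k - 1 :=
    Polynomial.natDegree_le_iff_coeff_eq_zero.mpr fun N hN =>
      key n N (by omega) (by omega)
  refine ⟨m * g, ?_, ?_⟩
  · have : (m * g).natDegree < k := by
      have := Polynomial.natDegree_mul_le (p := m) (q := g)
      omega
    exact lt_of_le_of_lt Polynomial.degree_le_natDegree (by exact_mod_cast this)
  · funext i
    have hmα : m.eval (α i) ≠ 0 := by
      intro hc
      apply hs i
      rw [hm, Polynomial.eval_mul, hc, mul_zero]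
    rw [Polynomial.eval_mul, hgeval i, hv i, hm, Polynomial.eval_mul]
    have h1 := ht i
    field_simp
end
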